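/- In the multi-cell load-coupled network, for each i define v_i(q) as the minimum of Σ_{j∈J_i} a_{ij}(q)·m_{ij}·(e^{b_{ij}/m_{ij}} − 1) over all m_i with m_{ij} > 0 and Σ_{j∈J_i} m_{ij} ≤ 1, where a_{ij}(q) = (Σ_{k≠i} q_k·g_{kj} + σ²)/g_{ij} and b_{ij} = (ln 2)·D_{ij}/B. Then for every q ∈ ℝ^N with q ≥ 0, this minimum is attained and v_i(q) > 0 for all i (positivity of the interference function v). -/
import Mathlib


open Finset

lemma quarter_sq_le_exp_sub_one {x : ℝ} (hx : 0 ≤ x) : x^2/4 ≤ Real.exp x - 1 := by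
  have h2 : Real.exp x = Real.exp (x/2) * Real.exp (x/2) := by
    rw [← Real.exp_add]; ring_nf
  have h := Real.add_one_le_exp (x/2)
  have hnn : (0:ℝ) ≤ x/2 + 1 := by linarith
  nlinarith [mul_self_le_mul_self hnn h]

lemma key_bound {a b t : ℝ} (ha : 0 < a) (hb : 0 < b) (ht : 0 < t) :
    a * b^2 / (4 * t) ≤ a * t * (Real.exp (b / t) - 1) := by
  have hx : 0 ≤ b / t := le_of_lt (div_pos hb ht)
  have hq := quarter_sq_le_exp_sub_one hx
  have heq : a * b^2 / (4 * t) = a * t * ((b/t)^2/4) := by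
    field_simp
  rw [heq]
  exact mul_le_mul_of_nonneg_left hq (by positivity)


/-- The set of power values `Σ_{j∈J_i} a_{ij}(q)·m_j·(e^{b_{ij}/m_j} − 1)` achievable by
base station `i` over time allocations `m` with `m_j > 0` and `Σ_j m_j ≤ 1`, where
`a_{ij}(q) = (Σ_{k≠i} q_k·g_{k,(i,j)} + σ²)/g_{i,(i,j)}` and `b_{ij} = (ln 2)·D_{ij}/B`.
Its minimum is the interference function value `v_i(q)`. -/
noncomputable def vValueSet (N : ℕ) (K : Fin N → ℕ) (B σ2 : ℝ)
    (g : Fin N → (i : Fin N) → Fin (K i) → ℝ)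
    (D : (i : Fin N) → Fin (K i) → ℝ)
    (q : Fin N → ℝ) (i : Fin N) : Set ℝ :=
  { v : ℝ | ∃ m : Fin (K i) → ℝ, (∀ j, 0 < m j) ∧ (∑ j, m j ≤ 1) ∧
      v = ∑ j, ((∑ k ∈ Finset.univ.erase i, q k * g k i j) + σ2) / g i i j *
        m j * (Real.exp (Real.log 2 * D i j / B / m j) - 1) }

/-- Positivity (and attainment) of the interference function: for every `q ≥ 0` and
every base station `i`, the minimum `v_i(q)` of the per-cell power over admissible time
allocations is attained and is strictly positive. -/
theorem stmt_12 (N : ℕ) (hN : 1 ≤ N) (K : Fin N → ℕ) (hK : ∀ i, 1 ≤ K i)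
    (B σ2 : ℝ) (hB : 0 < B) (hσ : 0 < σ2)
    (g : Fin N → (i : Fin N) → Fin (K i) → ℝ) (hg : ∀ k i j, 0 < g k i j)
    (D : (i : Fin N) → Fin (K i) → ℝ) (hD : ∀ i j, 0 < D i j)
    (q : Fin N → ℝ) (hq : ∀ k, 0 ≤ q k) :
    ∀ i : Fin N, ∃ val : ℝ, IsLeast (vValueSet N K B σ2 g D q i) val ∧ 0 < val := by
  intro i
  set a : Fin (K i) → ℝ :=
    fun j => ((∑ k ∈ Finset.univ.erase i, q k * g k i j) + σ2) / g i i j with ha_def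
  set b : Fin (K i) → ℝ := fun j => Real.log 2 * D i j / B with hb_def
  have ha : ∀ j, 0 < a j := by
    intro j
    apply div_pos _ (hg i i j)
    have : 0 ≤ ∑ k ∈ Finset.univ.erase i, q k * g k i j :=
      Finset.sum_nonneg fun k _ => mul_nonneg (hq k) (hg k i j).le
    linarith
  have hb : ∀ j, 0 < b j := fun j =>
    div_pos (mul_pos (Real.log_pos (by norm_num)) (hD i j)) hB
  set f : (Fin (K i) → ℝ) → ℝ :=
    fun m => ∑ j, a j * m j * (Real.exp (b j / m j) - 1) with hf_def
  have hset : vValueSet N K B σ2 g D q i =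
      { v : ℝ | ∃ m : Fin (K i) → ℝ, (∀ j, 0 < m j) ∧ (∑ j, m j ≤ 1) ∧ v = f m } := rfl
  -- positivity of each term
  have hterm : ∀ (j : Fin (K i)) (t : ℝ), 0 < t →
      0 < a j * t * (Real.exp (b j / t) - 1) := by
    intro j t ht
    have h1 : 1 < Real.exp (b j / t) := Real.one_lt_exp_iff.mpr (div_pos (hb j) ht)
    exact mul_pos (mul_pos (ha j) ht) (sub_pos.mpr h1)
  have hKpos : 0 < (K i : ℝ) := by exact_mod_cast hK i
  -- reference point m0
  set m0 : Fin (K i) → ℝ := fun _ => (K i : ℝ)⁻¹ with hm0_def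
  have hm0pos : ∀ j, 0 < m0 j := fun j => inv_pos.mpr hKpos
  have hm0sum : ∑ j, m0 j = 1 := by
    simp [hm0_def, Finset.sum_const, Finset.card_univ, nsmul_eq_mul]
    exact mul_inv_cancel₀ (ne_of_gt hKpos)
  set c : ℝ := f m0 with hc_def
  have hc : 0 < c := Finset.sum_pos (fun j _ => hterm j _ (hm0pos j))
    (Finset.univ_nonempty_iff.mpr ⟨⟨0, hK i⟩⟩)
  have hne : (Finset.univ : Finset (Fin (K i))).Nonempty :=
    Finset.univ_nonempty_iff.mpr ⟨⟨0, hK i⟩⟩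
  -- threshold ε
  set ε : ℝ := min (K i : ℝ)⁻¹
      (Finset.univ.inf' hne fun j => a j * (b j)^2 / (4 * (c + 1))) with hε_def
  have hεpos : 0 < ε := by
    apply lt_min (inv_pos.mpr hKpos)
    rw [Finset.lt_inf'_iff]
    intro j _
    have := ha j; have := hb j
    positivity
  have hεK : ε ≤ (K i : ℝ)⁻¹ := min_le_left _ _
  have hεj : ∀ j, ε ≤ a j * (b j)^2 / (4 * (c + 1)) := fun j =>
    le_trans (min_le_right _ _) (Finset.inf'_le _ (Finset.mem_univ j))
  -- the compact truncated set
  set S : Set (Fin (K i) → ℝ) :=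
    {m | ∀ j, ε ≤ m j} ∩ {m | ∑ j, m j ≤ 1} with hS_def
  have hm0S : m0 ∈ S := ⟨fun j => hεK, le_of_eq hm0sum⟩
  have hSsub : ∀ m ∈ S, ∀ j, ε ≤ m j ∧ m j ≤ 1 := by
    intro m hm j
    refine ⟨hm.1 j, ?_⟩
    calc m j ≤ ∑ k, m k :=
          Finset.single_le_sum (fun k _ => le_trans hεpos.le (hm.1 k)) (Finset.mem_univ j)
      _ ≤ 1 := hm.2
  have hclosed : IsClosed S := by
    apply IsClosed.inter
    · have : {m : Fin (K i) → ℝ | ∀ j, ε ≤ m j} = ⋂ j, {m | ε ≤ m j} := by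
        ext m; simp [Set.mem_iInter]
      rw [this]
      exact isClosed_iInter fun j => isClosed_le continuous_const (continuous_apply j)
    · exact isClosed_le (by fun_prop) continuous_const
  have hcompact : IsCompact S := by
    have hsub : S ⊆ Set.Icc (fun _ => ε) (fun _ => 1) := by
      intro m hm
      constructor <;> intro j
      · exact (hSsub m hm j).1
      · exact (hSsub m hm j).2
    exact (isCompact_Icc).of_isClosed_subset hclosed hsub
  have hcont : ContinuousOn f S := by
    apply continuousOn_finset_sum
    intro j _
    apply ContinuousOn.mul
    · exact (continuousOn_const.mul (continuous_apply j).continuousOn)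
    · apply ContinuousOn.sub _ continuousOn_const
      apply Real.continuous_exp.comp_continuousOn
      apply ContinuousOn.div continuousOn_const (continuous_apply j).continuousOn
      intro m hm
      exact ne_of_gt (lt_of_lt_of_le hεpos (hm.1 j))
  obtain ⟨x, hxS, hxmin⟩ := hcompact.exists_isMinOn ⟨m0, hm0S⟩ hcont
  have hfxc : f x ≤ c := hxmin hm0S
  refine ⟨f x, ⟨?_, ?_⟩, ?_⟩
  · -- membership
    exact ⟨x, fun j => lt_of_lt_of_le hεpos (hxS.1 j), hxS.2, rfl⟩
  · -- lower bound
    rintro v ⟨m, hmpos, hmsum, rfl⟩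
    show f x ≤ f m
    by_cases hcase : ∀ j, ε ≤ m j
    · exact hxmin ⟨hcase, hmsum⟩
    · push_neg at hcase
      obtain ⟨j, hj⟩ := hcase
      have h1 : a j * m j * (Real.exp (b j / m j) - 1) ≤ f m :=
        Finset.single_le_sum (fun k _ => (hterm k _ (hmpos k)).le) (Finset.mem_univ j)
      have h2 : a j * (b j)^2 / (4 * m j) ≤ a j * m j * (Real.exp (b j / m j) - 1) :=
        key_bound (ha j) (hb j) (hmpos j)
      have h3 : c + 1 < a j * (b j)^2 / (4 * m j) := by
        have hm' : m j < a j * (b j)^2 / (4 * (c + 1)) := lt_of_lt_of_le hj (hεj j)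
        have h4 : (0:ℝ) < 4 * (c + 1) := by linarith
        have h5 : (0:ℝ) < 4 * m j := by linarith [hmpos j]
        rw [lt_div_iff₀ h4] at hm'
        rw [lt_div_iff₀ h5]
        have heq : (c + 1) * (4 * m j) = m j * (4 * (c + 1)) := by ring
        linarith
      linarith
  · -- positivity
    calc (0:ℝ) < a ⟨0, hK i⟩ * x ⟨0, hK i⟩ *
          (Real.exp (b ⟨0, hK i⟩ / x ⟨0, hK i⟩) - 1) :=
        hterm _ _ (lt_of_lt_of_le hεpos (hxS.1 _))
      _ ≤ f x :=
        Finset.single_le_sum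
          (fun k _ => (hterm k _ (lt_of_lt_of_le hεpos (hxS.1 k))).le) (Finset.mem_univ _)
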